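/- arXiv:1805.10137 — 2 statements merged into one kernel-verified Lean document; each statement's English description precedes it below -/
import Mathlib

section
/- Let (gⁿ)_{n∈ℕ} be a sequence of nonnegative functions on (0,∞) with ∫₀^∞ (1+z) gⁿ(z) dz ≤ G for all n and some constant G > 0, and suppose gⁿ ⇀ g weakly in L¹(0,∞) for some g ∈ S⁺. Then for every a > 0, the truncated collision loss terms converge weakly: B₃ⁿ(gⁿ) ⇀ B₃(g) in L¹((0,a)) as n → ∞, where B₃ⁿ(gⁿ)(z) = ∫₀^{n−z} Φₙ(z,z₁)gⁿ(z)gⁿ(z₁) dz₁ and B₃(g)(z) = ∫₀^∞ Φ(z,z₁)g(z)g(z₁) dz₁. -/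
/-!
For `0 < z < a < n` the cut-off `χ_{(0,n)}(z + z₁)` only removes `z₁ ≥ n - z`, so
`B₃ⁿ(gⁿ)(z) = k₁ gⁿ(z) (z^α m_β(gⁿ, n - z) + z^β m_α(gⁿ, n - z))` with
`m_γ(f, R) = ∫₀^R f(z₁) z₁^γ dz₁`. Since `z^γ ≤ R^(γ-1) z` for `z ≥ R`, the tails of these
moments are `O(R^(γ-1))` uniformly in `n` because `γ < 1`. Hence the full moments of `gⁿ`
converge to those of `g`, and `m_γ(gⁿ, n - z) → M_γ(g)` uniformly on `(0,a)`. The factor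
multiplying `gⁿ(z)` thus converges uniformly to a bounded function, and weak convergence of
`gⁿ` together with its uniform `L¹` bound gives the claim.
-/

open MeasureTheory Set Filter

noncomputable section

/-- The collision kernel `Φ(z,z₁) = k₁ (z^α z₁^β + z₁^α z^β)`. -/
def Phi (k₁ α β : ℝ) (z z₁ : ℝ) : ℝ := k₁ * (z ^ α * z₁ ^ β + z₁ ^ α * z ^ β)

/-- The truncated kernel `Φₙ(z,z₁) = Φ(z,z₁) χ_{(0,n)}(z+z₁)`. -/
def PhiN (k₁ α β n : ℝ) (z z₁ : ℝ) : ℝ :=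
  (Ioo (0:ℝ) n).indicator (fun _ => (1:ℝ)) (z + z₁) * Phi k₁ α β z z₁

/-- Coagulation gain term `C₁(g)`. -/
def C1 (E Φ : ℝ → ℝ → ℝ) (g : ℝ → ℝ) (z : ℝ) : ℝ :=
  (1 / 2) * ∫ z₁ in Ioo (0:ℝ) z, E (z - z₁) z₁ * Φ (z - z₁) z₁ * g (z - z₁) * g z₁

/-- Collision loss term `B₃(g)`. -/
def B3 (Φ : ℝ → ℝ → ℝ) (g : ℝ → ℝ) (z : ℝ) : ℝ :=
  ∫ z₁ in Ioi (0:ℝ), Φ z z₁ * g z * g z₁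

/-- Collisional breakage gain term `B₁(g)`. -/
def B1 (P : ℝ → ℝ → ℝ → ℝ) (E Φ : ℝ → ℝ → ℝ) (g : ℝ → ℝ) (z : ℝ) : ℝ :=
  (1 / 2) * ∫ z₁ in Ioi z, ∫ z₂ in Ioo (0:ℝ) z₁,
    P z (z₁ - z₂) z₂ * (1 - E (z₁ - z₂) z₂) * Φ (z₁ - z₂) z₂ * g (z₁ - z₂) * g z₂

/-- Truncated collision loss term `B₃ⁿ(g)`. -/
def B3n (Φ : ℝ → ℝ → ℝ) (n : ℝ) (g : ℝ → ℝ) (z : ℝ) : ℝ :=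
  ∫ z₁ in Ioo (0:ℝ) (n - z), Φ z z₁ * g z * g z₁

/-- Truncated collisional breakage gain term `B₁ⁿ(g)`. -/
def B1n (P : ℝ → ℝ → ℝ → ℝ) (E Φ : ℝ → ℝ → ℝ) (n : ℝ) (g : ℝ → ℝ) (z : ℝ) : ℝ :=
  (1 / 2) * ∫ z₁ in Ioo z n, ∫ z₂ in Ioo (0:ℝ) z₁,
    P z (z₁ - z₂) z₂ * (1 - E (z₁ - z₂) z₂) * Φ (z₁ - z₂) z₂ * g (z₁ - z₂) * g z₂

/-- Membership in the space `S⁺`: nonnegative and integrable against `(1+z)dz` on `(0,∞)`. -/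
def MemSplus (g : ℝ → ℝ) : Prop :=
  (∀ z, 0 ≤ g z) ∧ IntegrableOn (fun z => (1 + z) * g z) (Ioi 0) volume

/-- `g` is the nonnegative mass-conserving solution of the `n`-truncated
coagulation–collisional breakage system on `[0,T]`, extended by zero for `z ≥ n`. -/
def IsTruncSol (k₁ α β : ℝ) (E : ℝ → ℝ → ℝ) (P : ℝ → ℝ → ℝ → ℝ)
    (T : ℝ) (g₀ : ℝ → ℝ) (n : ℕ) (g : ℝ → ℝ → ℝ) : Prop :=
  (∀ z t, 0 ≤ g z t) ∧
  (∀ z t, (n : ℝ) ≤ z → g z t = 0) ∧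
  (∀ t ∈ Icc (0:ℝ) T, IntegrableOn (fun z => (1 + z) * g z t) (Ioi 0) volume) ∧
  (∀ z ∈ Ioo (0:ℝ) (n : ℝ), ∀ t ∈ Icc (0:ℝ) T,
    g z t = g₀ z + ∫ s in (0:ℝ)..t,
      (C1 E (PhiN k₁ α β (n : ℝ)) (fun y => g y s) z
        - B3n (PhiN k₁ α β (n : ℝ)) (n : ℝ) (fun y => g y s) z
        + B1n P E (PhiN k₁ α β (n : ℝ)) (n : ℝ) (fun y => g y s) z)) ∧
  (∀ t ∈ Icc (0:ℝ) T, ∫ z in Ioo (0:ℝ) (n : ℝ), z * g z t = ∫ z in Ioo (0:ℝ) (n : ℝ), z * g₀ z)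

/-- The power-law fragment distribution `P_ν`. -/
def Pnu (ν : ℝ) (z z₁ z₂ : ℝ) : ℝ :=
  if 0 < z ∧ z < z₁ + z₂ then (ν + 2) * z ^ ν / (z₁ + z₂) ^ (ν + 1) else 0

open Topology

theorem tendsto_of_forall_approx {ι : Type*} {l : Filter ι} {u : ι → ℝ} {L : ℝ}
    (h : ∀ ε > 0, ∃ (v : ι → ℝ) (L' : ℝ),
      Tendsto v l (𝓝 L') ∧ (∀ i, |u i - v i| ≤ ε) ∧ |L - L'| ≤ ε) :
    Tendsto u l (𝓝 L) := by
  refine Metric.tendsto_nhds.2 fun ε hε => ?_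
  obtain ⟨v, L', hv, huv, hL⟩ := h (ε / 3) (by positivity)
  filter_upwards [Metric.tendsto_nhds.1 hv (ε / 3) (by positivity)] with i hi
  rw [Real.dist_eq] at hi ⊢
  have := abs_le.1 (huv i)
  have := abs_lt.1 hi
  have := abs_le.1 hL
  rw [abs_lt]
  constructor <;> linarith

theorem tendsto_integral_mul_of_uniform_approx {X ι : Type*} [MeasurableSpace X]
    {μ : Measure X} {l : Filter ι} {f h : ι → X → ℝ} {f₀ h₀ : X → ℝ} {δ : ι → ℝ} {K B : ℝ}
    (hf : ∀ n, Integrable (f n) μ) (hfK : ∀ n, ∫ x, |f n x| ∂μ ≤ K)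
    (hh : ∀ n, AEStronglyMeasurable (h n) μ) (hh₀ : AEStronglyMeasurable h₀ μ)
    (hh₀B : ∀ᵐ x ∂μ, |h₀ x| ≤ B)
    (hlim : Tendsto (fun n => ∫ x, f n x * h₀ x ∂μ) l (𝓝 (∫ x, f₀ x * h₀ x ∂μ)))
    (hδ : Tendsto δ l (𝓝 0)) (hhδ : ∀ᶠ n in l, ∀ᵐ x ∂μ, |h n x - h₀ x| ≤ δ n) :
    Tendsto (fun n => ∫ x, f n x * h n x ∂μ) l (𝓝 (∫ x, f₀ x * h₀ x ∂μ)) := by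
  have hfh₀ : ∀ n, Integrable (fun x => f n x * h₀ x) μ := fun n => (hf n).mul_bdd hh₀ hh₀B
  have herr : Tendsto (fun n => ∫ x, f n x * h n x ∂μ - ∫ x, f n x * h₀ x ∂μ) l (𝓝 0) := by
    refine squeeze_zero_norm' ?_ (by simpa using hδ.abs.mul_const K)
    filter_upwards [hhδ] with n hn
    have hfh : Integrable (fun x => f n x * h n x) μ := by
      refine (hf n).mul_bdd (hh n) (c := B + δ n) ?_
      filter_upwards [hn, hh₀B] with x hx hx₀
      rw [Real.norm_eq_abs]
      linarith [abs_sub_abs_le_abs_sub (h n x) (h₀ x)]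
    rw [← integral_sub hfh (hfh₀ n)]
    calc ‖∫ x, f n x * h n x - f n x * h₀ x ∂μ‖ ≤ ∫ x, |δ n| * |f n x| ∂μ := by
          refine norm_integral_le_of_norm_le ((hf n).abs.const_mul _) ?_
          filter_upwards [hn] with x hx
          rw [← mul_sub, Real.norm_eq_abs, abs_mul, mul_comm]
          exact mul_le_mul_of_nonneg_right (hx.trans (le_abs_self _)) (abs_nonneg _)
      _ = |δ n| * ∫ x, |f n x| ∂μ := integral_const_mul _ _
      _ ≤ |δ n| * K := mul_le_mul_of_nonneg_left (hfK n) (abs_nonneg _)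
  simpa using herr.add hlim

theorem tendsto_setIntegral_mul_of_weak {ι : Type*} {l : Filter ι} {g : ι → ℝ → ℝ}
    {glim : ℝ → ℝ}
    (hweak : ∀ ψ : ℝ → ℝ, Measurable ψ → (∃ C, ∀ z, |ψ z| ≤ C) →
      Tendsto (fun n => ∫ z in Ioi (0:ℝ), g n z * ψ z) l (𝓝 (∫ z in Ioi (0:ℝ), glim z * ψ z)))
    {s : Set ℝ} (hs : MeasurableSet s) (hs₀ : s ⊆ Ioi 0) {φ : ℝ → ℝ} (hφ : Measurable φ)
    {C : ℝ} (hφC : ∀ z ∈ s, |φ z| ≤ C) :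
    Tendsto (fun n => ∫ z in s, g n z * φ z) l (𝓝 (∫ z in s, glim z * φ z)) := by
  have hrestrict : ∀ f : ℝ → ℝ, ∫ z in Ioi 0, f z * s.indicator φ z = ∫ z in s, f z * φ z := by
    intro f
    simp_rw [← indicator_mul_right]
    rw [setIntegral_indicator hs, inter_eq_right.2 hs₀]
  have hbdd : ∀ z, |s.indicator φ z| ≤ max C 0 := by
    intro z
    by_cases hz : z ∈ s
    · simpa [hz] using Or.inl (hφC z hz)
    · simp [hz]
  simpa only [hrestrict] using hweak _ (hφ.indicator hs) ⟨_, hbdd⟩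

theorem rpow_le_one_add {z γ : ℝ} (hz : 0 ≤ z) (hγ₀ : 0 ≤ γ) (hγ₁ : γ ≤ 1) :
    z ^ γ ≤ 1 + z := by
  rcases le_total z 1 with h | h
  · linarith [Real.rpow_le_one hz h hγ₀]
  · linarith [Real.rpow_le_self_of_one_le h hγ₁]

theorem integrableOn_mul_of_abs_le_one_add {f w : ℝ → ℝ}
    (hf : IntegrableOn (fun z => (1 + z) * f z) (Ioi 0)) (hw : Measurable w)
    (hwle : ∀ z ∈ Ioi (0:ℝ), |w z| ≤ 1 + z) :
    IntegrableOn (fun z => f z * w z) (Ioi 0) := by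
  refine (Integrable.mul_bdd hf (g := fun z => w z / (1 + z)) (c := 1)
    (hw.div (by fun_prop)).aestronglyMeasurable ?_).congr ?_
  · refine ae_restrict_of_forall_mem measurableSet_Ioi fun z (hz : 0 < z) => ?_
    rw [Real.norm_eq_abs, abs_div, abs_of_pos (by linarith : 0 < 1 + z)]
    exact div_le_one_of_le₀ (hwle z hz) (by linarith)
  · refine ae_restrict_of_forall_mem measurableSet_Ioi fun z (hz : 0 < z) => ?_
    field_simp

theorem integrableOn_mul_rpow_of_one_add {f : ℝ → ℝ}
    (hf : IntegrableOn (fun z => (1 + z) * f z) (Ioi 0)) {γ : ℝ} (hγ₀ : 0 ≤ γ) (hγ₁ : γ ≤ 1) :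
    IntegrableOn (fun z => f z * z ^ γ) (Ioi 0) :=
  integrableOn_mul_of_abs_le_one_add hf (by fun_prop) fun z (hz : 0 < z) => by
    rw [abs_of_nonneg (Real.rpow_nonneg hz.le γ)]
    exact rpow_le_one_add hz.le hγ₀ hγ₁

theorem integrableOn_of_one_add_mul {f : ℝ → ℝ}
    (hf : IntegrableOn (fun z => (1 + z) * f z) (Ioi 0)) : IntegrableOn f (Ioi 0) := by
  simpa using integrableOn_mul_of_abs_le_one_add hf (w := fun _ => 1) measurable_const
    fun z (hz : 0 < z) => by rw [abs_one]; linarith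

theorem setIntegral_le_integral_one_add_mul {f : ℝ → ℝ} (hf₀ : ∀ z, 0 ≤ f z)
    (hf : IntegrableOn (fun z => (1 + z) * f z) (Ioi 0)) {s : Set ℝ} (hs : MeasurableSet s)
    (hs₀ : s ⊆ Ioi 0) :
    ∫ z in s, f z ≤ ∫ z in Ioi 0, (1 + z) * f z := by
  have hnonneg : ∀ z ∈ Ioi (0:ℝ), 0 ≤ (1 + z) * f z := fun z (hz : 0 < z) =>
    mul_nonneg (by linarith) (hf₀ z)
  calc ∫ z in s, f z ≤ ∫ z in s, (1 + z) * f z :=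
        integral_mono_of_nonneg (ae_of_all _ hf₀) (hf.mono_set hs₀)
          (ae_restrict_of_forall_mem hs fun z hz => by
            have : (0:ℝ) < z := hs₀ hz
            show f z ≤ (1 + z) * f z
            nlinarith [hf₀ z])
    _ ≤ ∫ z in Ioi 0, (1 + z) * f z :=
        setIntegral_mono_set hf (ae_restrict_of_forall_mem measurableSet_Ioi hnonneg)
          hs₀.eventuallyLE

def powMoment (f : ℝ → ℝ) (γ : ℝ) : ℝ := ∫ z in Ioi 0, f z * z ^ γ

def truncPowMoment (f : ℝ → ℝ) (γ R : ℝ) : ℝ := ∫ z in Ioo 0 R, f z * z ^ γ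

theorem truncPowMoment_mono {f : ℝ → ℝ} (hf₀ : ∀ z, 0 ≤ f z) {γ : ℝ}
    (hf : IntegrableOn (fun z => f z * z ^ γ) (Ioi 0)) : Monotone (truncPowMoment f γ) :=
  fun _ _ hRR' => setIntegral_mono_set (hf.mono_set Ioo_subset_Ioi_self)
    (ae_restrict_of_forall_mem measurableSet_Ioo fun z hz =>
      mul_nonneg (hf₀ z) (Real.rpow_nonneg hz.1.le _))
    (Ioo_subset_Ioo_right hRR').eventuallyLE

/-- The tail beyond `R` is controlled by `z ^ γ ≤ R ^ (γ - 1) * z` for `z ≥ R`. -/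
theorem abs_truncPowMoment_sub_powMoment_le {f : ℝ → ℝ} (hf₀ : ∀ z, 0 ≤ f z)
    (hf : IntegrableOn (fun z => (1 + z) * f z) (Ioi 0)) {γ R : ℝ} (hγ₀ : 0 ≤ γ) (hγ₁ : γ ≤ 1)
    (hR : 0 < R) :
    |truncPowMoment f γ R - powMoment f γ| ≤ R ^ (γ - 1) * ∫ z in Ioi 0, (1 + z) * f z := by
  have hint := integrableOn_mul_rpow_of_one_add hf hγ₀ hγ₁
  have hIci : Ici R ⊆ Ioi 0 := fun z (hz : R ≤ z) => hR.trans_le hz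
  have hsplit : powMoment f γ = truncPowMoment f γ R + ∫ z in Ici R, f z * z ^ γ := by
    rw [powMoment, truncPowMoment, ← Ioo_union_Ici_eq_Ioi hR]
    exact setIntegral_union (disjoint_left.2 fun z hz hz' => not_le.2 hz.2 hz')
      measurableSet_Ici (hint.mono_set Ioo_subset_Ioi_self) (hint.mono_set hIci)
  have htail₀ : 0 ≤ ∫ z in Ici R, f z * z ^ γ := setIntegral_nonneg measurableSet_Ici
    fun z (hz : R ≤ z) => mul_nonneg (hf₀ z) (Real.rpow_nonneg (hR.le.trans hz) _)
  rw [hsplit, sub_add_cancel_left, abs_neg, abs_of_nonneg htail₀]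
  calc ∫ z in Ici R, f z * z ^ γ ≤ ∫ z in Ici R, R ^ (γ - 1) * ((1 + z) * f z) := by
        refine integral_mono_of_nonneg ?_ ((hf.mono_set hIci).const_mul _) ?_
        · exact ae_restrict_of_forall_mem measurableSet_Ici fun z (hz : R ≤ z) =>
            mul_nonneg (hf₀ z) (Real.rpow_nonneg (hR.le.trans hz) _)
        refine ae_restrict_of_forall_mem measurableSet_Ici fun z (hz : R ≤ z) => ?_
        have hz₀ : 0 < z := hR.trans_le hz
        have hpow : z ^ γ = z ^ (γ - 1) * z := by
          rw [Real.rpow_sub_one hz₀.ne', div_mul_cancel₀ _ hz₀.ne']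
        have hmono : z ^ (γ - 1) ≤ R ^ (γ - 1) :=
          Real.rpow_le_rpow_of_nonpos hR hz (by linarith)
        calc f z * z ^ γ = z ^ (γ - 1) * (z * f z) := by rw [hpow]; ring
          _ ≤ R ^ (γ - 1) * (z * f z) :=
              mul_le_mul_of_nonneg_right hmono (mul_nonneg hz₀.le (hf₀ z))
          _ ≤ R ^ (γ - 1) * ((1 + z) * f z) :=
              mul_le_mul_of_nonneg_left (by linarith [hf₀ z]) (Real.rpow_nonneg hR.le _)
    _ = R ^ (γ - 1) * ∫ z in Ici R, (1 + z) * f z := integral_const_mul _ _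
    _ ≤ R ^ (γ - 1) * ∫ z in Ioi 0, (1 + z) * f z := by
        refine mul_le_mul_of_nonneg_left ?_ (Real.rpow_nonneg hR.le _)
        exact setIntegral_mono_set hf (ae_restrict_of_forall_mem measurableSet_Ioi
          fun z (hz : 0 < z) => mul_nonneg (by linarith) (hf₀ z)) hIci.eventuallyLE

theorem abs_truncPowMoment_sub_le {f f₀ : ℝ → ℝ} (hf₀ : ∀ z, 0 ≤ f z)
    (hf : IntegrableOn (fun z => (1 + z) * f z) (Ioi 0)) {G : ℝ}
    (hfG : ∫ z in Ioi 0, (1 + z) * f z ≤ G) {γ R₀ R : ℝ} (hγ₀ : 0 ≤ γ) (hγ₁ : γ ≤ 1)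
    (hR₀ : 0 < R₀) (hR : R₀ ≤ R) :
    |truncPowMoment f γ R - powMoment f₀ γ|
      ≤ R₀ ^ (γ - 1) * G + |powMoment f γ - powMoment f₀ γ| := by
  have hmass : 0 ≤ ∫ z in Ioi 0, (1 + z) * f z := setIntegral_nonneg measurableSet_Ioi
    fun z (hz : 0 < z) => mul_nonneg (by linarith) (hf₀ z)
  have htail : |truncPowMoment f γ R - powMoment f γ| ≤ R₀ ^ (γ - 1) * G :=
    calc _ ≤ R ^ (γ - 1) * ∫ z in Ioi 0, (1 + z) * f z :=
          abs_truncPowMoment_sub_powMoment_le hf₀ hf hγ₀ hγ₁ (hR₀.trans_le hR)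
      _ ≤ R₀ ^ (γ - 1) * G := mul_le_mul (Real.rpow_le_rpow_of_nonpos hR₀ hR (by linarith))
          hfG hmass (Real.rpow_nonneg hR₀.le _)
  linarith [abs_sub_le (truncPowMoment f γ R) (powMoment f γ) (powMoment f₀ γ)]

/-- `∫₀^∞ Φ(z,z₁) f(z₁) dz₁`, written through `Mα = ∫ f(z₁) z₁^α dz₁` and
`Mβ = ∫ f(z₁) z₁^β dz₁`. -/
def collisionRate (k₁ α β Mα Mβ z : ℝ) : ℝ := k₁ * (z ^ α * Mβ + z ^ β * Mα)

theorem abs_collisionRate_sub_le {k₁ α β Mα Mβ Mα' Mβ' z a : ℝ} (hz₀ : 0 ≤ z) (hza : z ≤ a)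
    (hα₀ : 0 ≤ α) (hα₁ : α ≤ 1) (hβ₀ : 0 ≤ β) (hβ₁ : β ≤ 1) :
    |collisionRate k₁ α β Mα Mβ z - collisionRate k₁ α β Mα' Mβ' z|
      ≤ |k₁| * (1 + a) * (|Mα - Mα'| + |Mβ - Mβ'|) := by
  have hpow : ∀ {γ : ℝ}, 0 ≤ γ → γ ≤ 1 → |z ^ γ| ≤ 1 + a := fun h₀ h₁ => by
    rw [abs_of_nonneg (Real.rpow_nonneg hz₀ _)]
    linarith [rpow_le_one_add hz₀ h₀ h₁]
  calc |collisionRate k₁ α β Mα Mβ z - collisionRate k₁ α β Mα' Mβ' z|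
      = |k₁| * |z ^ α * (Mβ - Mβ') + z ^ β * (Mα - Mα')| := by
        rw [collisionRate, collisionRate, ← abs_mul]; ring_nf
    _ ≤ |k₁| * ((1 + a) * |Mβ - Mβ'| + (1 + a) * |Mα - Mα'|) := by
        gcongr
        refine (abs_add_le _ _).trans (add_le_add ?_ ?_) <;> rw [abs_mul] <;> gcongr
        exacts [hpow hα₀ hα₁, hpow hβ₀ hβ₁]
    _ = |k₁| * (1 + a) * (|Mα - Mα'| + |Mβ - Mβ'|) := by ring

theorem setIntegral_Phi_mul_eq {k₁ α β z : ℝ} {f : ℝ → ℝ} {s : Set ℝ}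
    (hα : IntegrableOn (fun z₁ => f z₁ * z₁ ^ α) s)
    (hβ : IntegrableOn (fun z₁ => f z₁ * z₁ ^ β) s) :
    ∫ z₁ in s, Phi k₁ α β z z₁ * f z * f z₁
      = f z * collisionRate k₁ α β (∫ z₁ in s, f z₁ * z₁ ^ α) (∫ z₁ in s, f z₁ * z₁ ^ β) z := by
  have hsplit : (fun z₁ => Phi k₁ α β z z₁ * f z * f z₁) = fun z₁ =>
      (k₁ * f z * z ^ α) * (f z₁ * z₁ ^ β) + (k₁ * f z * z ^ β) * (f z₁ * z₁ ^ α) := by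
    ext z₁
    rw [Phi]
    ring
  rw [hsplit, integral_add (hβ.const_mul _) (hα.const_mul _), integral_const_mul,
    integral_const_mul, collisionRate]
  ring

theorem B3_Phi_eq {k₁ α β z : ℝ} {f : ℝ → ℝ}
    (hα : IntegrableOn (fun z₁ => f z₁ * z₁ ^ α) (Ioi 0))
    (hβ : IntegrableOn (fun z₁ => f z₁ * z₁ ^ β) (Ioi 0)) :
    B3 (Phi k₁ α β) f z = f z * collisionRate k₁ α β (powMoment f α) (powMoment f β) z :=
  setIntegral_Phi_mul_eq hα hβ

theorem B3n_PhiN_eq {k₁ α β n z : ℝ} {f : ℝ → ℝ} (hz : 0 < z)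
    (hα : IntegrableOn (fun z₁ => f z₁ * z₁ ^ α) (Ioi 0))
    (hβ : IntegrableOn (fun z₁ => f z₁ * z₁ ^ β) (Ioi 0)) :
    B3n (PhiN k₁ α β n) n f z
      = f z * collisionRate k₁ α β (truncPowMoment f α (n - z)) (truncPowMoment f β (n - z)) z := by
  have hcut : ∀ z₁ ∈ Ioo 0 (n - z),
      PhiN k₁ α β n z z₁ * f z * f z₁ = Phi k₁ α β z z₁ * f z * f z₁ :=
    fun z₁ hz₁ => by
      have hsum : z + z₁ ∈ Ioo 0 n := ⟨by linarith [hz₁.1], by linarith [hz₁.2]⟩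
      rw [PhiN, indicator_of_mem hsum, one_mul]
  rw [B3n, setIntegral_congr_fun measurableSet_Ioo hcut]
  exact setIntegral_Phi_mul_eq (hα.mono_set Ioo_subset_Ioi_self) (hβ.mono_set Ioo_subset_Ioi_self)

section WeakLimit

variable {g : ℕ → ℝ → ℝ} {glim : ℝ → ℝ} {G : ℝ}

theorem tendsto_powMoment (hg₀ : ∀ n z, 0 ≤ g n z)
    (hg : ∀ n, IntegrableOn (fun z => (1 + z) * g n z) (Ioi 0))
    (hgG : ∀ n, ∫ z in Ioi 0, (1 + z) * g n z ≤ G) (hglim₀ : ∀ z, 0 ≤ glim z)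
    (hglim : IntegrableOn (fun z => (1 + z) * glim z) (Ioi 0))
    (hweak : ∀ ψ : ℝ → ℝ, Measurable ψ → (∃ C, ∀ z, |ψ z| ≤ C) →
      Tendsto (fun n => ∫ z in Ioi (0:ℝ), g n z * ψ z) atTop
        (𝓝 (∫ z in Ioi (0:ℝ), glim z * ψ z)))
    {γ : ℝ} (hγ₀ : 0 ≤ γ) (hγ₁ : γ < 1) :
    Tendsto (fun n => powMoment (g n) γ) atTop (𝓝 (powMoment glim γ)) := by
  set M := max G (∫ z in Ioi 0, (1 + z) * glim z)
  refine tendsto_of_forall_approx fun ε hε => ?_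
  have htail : Tendsto (fun R : ℝ => R ^ (γ - 1) * M) atTop (𝓝 0) := by
    have := (tendsto_rpow_neg_atTop (sub_pos.2 hγ₁)).mul_const M
    rwa [zero_mul, neg_sub] at this
  obtain ⟨R, hRε, hR⟩ :=
    ((htail.eventually (ge_mem_nhds hε)).and (eventually_gt_atTop 0)).exists
  have hRγ := Real.rpow_nonneg hR.le (γ - 1)
  refine ⟨fun n => truncPowMoment (g n) γ R, truncPowMoment glim γ R,
    tendsto_setIntegral_mul_of_weak hweak measurableSet_Ioo Ioo_subset_Ioi_self
      (by fun_prop) (C := 1 + R) fun z hz => ?_, fun n => ?_, ?_⟩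
  · rw [abs_of_nonneg (Real.rpow_nonneg hz.1.le γ)]
    linarith [rpow_le_one_add hz.1.le hγ₀ hγ₁.le, hz.2]
  · rw [abs_sub_comm]
    refine (abs_truncPowMoment_sub_powMoment_le (hg₀ n) (hg n) hγ₀ hγ₁.le hR).trans ?_
    exact hRε.trans' (mul_le_mul_of_nonneg_left ((hgG n).trans (le_max_left _ _)) hRγ)
  · rw [abs_sub_comm]
    refine (abs_truncPowMoment_sub_powMoment_le hglim₀ hglim hγ₀ hγ₁.le hR).trans ?_
    exact hRε.trans' (mul_le_mul_of_nonneg_left (le_max_right _ _) hRγ)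

theorem exists_tendsto_zero_abs_truncPowMoment_sub_le (hg₀ : ∀ n z, 0 ≤ g n z)
    (hg : ∀ n, IntegrableOn (fun z => (1 + z) * g n z) (Ioi 0))
    (hgG : ∀ n, ∫ z in Ioi 0, (1 + z) * g n z ≤ G) (hglim₀ : ∀ z, 0 ≤ glim z)
    (hglim : IntegrableOn (fun z => (1 + z) * glim z) (Ioi 0))
    (hweak : ∀ ψ : ℝ → ℝ, Measurable ψ → (∃ C, ∀ z, |ψ z| ≤ C) →
      Tendsto (fun n => ∫ z in Ioi (0:ℝ), g n z * ψ z) atTop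
        (𝓝 (∫ z in Ioi (0:ℝ), glim z * ψ z)))
    {γ : ℝ} (hγ₀ : 0 ≤ γ) (hγ₁ : γ < 1) (a : ℝ) :
    ∃ δ : ℕ → ℝ, Tendsto δ atTop (𝓝 0) ∧ ∀ᶠ n : ℕ in atTop, ∀ z ∈ Ioo 0 a,
      |truncPowMoment (g n) γ (n - z) - powMoment glim γ| ≤ δ n := by
  have hshift : Tendsto (fun n : ℕ => ((n : ℝ) - a) ^ (γ - 1)) atTop (𝓝 0) := by
    have := (tendsto_rpow_neg_atTop (sub_pos.2 hγ₁)).comp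
      (tendsto_atTop_add_const_right atTop (-a) tendsto_natCast_atTop_atTop)
    simpa only [Function.comp_def, neg_sub, ← sub_eq_add_neg] using this
  have hmoment := (tendsto_powMoment hg₀ hg hgG hglim₀ hglim hweak hγ₀ hγ₁).sub_const
    (powMoment glim γ)
  refine ⟨fun n => ((n : ℝ) - a) ^ (γ - 1) * G + |powMoment (g n) γ - powMoment glim γ|,
    by simpa using (hshift.mul_const G).add hmoment.abs, ?_⟩
  filter_upwards [tendsto_natCast_atTop_atTop.eventually_gt_atTop a] with n hn z hz
  exact abs_truncPowMoment_sub_le (hg₀ n) (hg n) (hgG n) hγ₀ hγ₁.le (sub_pos.2 hn)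
    (by linarith [hz.2])

theorem tendsto_setIntegral_mul_collisionRate {k₁ α β a C Mα Mβ : ℝ} {ψ : ℝ → ℝ}
    {cα cβ : ℕ → ℝ → ℝ} {δα δβ : ℕ → ℝ}
    (hg₀ : ∀ n z, 0 ≤ g n z) (hg : ∀ n, IntegrableOn (fun z => (1 + z) * g n z) (Ioi 0))
    (hgG : ∀ n, ∫ z in Ioi 0, (1 + z) * g n z ≤ G)
    (hweak : ∀ ψ : ℝ → ℝ, Measurable ψ → (∃ C, ∀ z, |ψ z| ≤ C) →
      Tendsto (fun n => ∫ z in Ioi (0:ℝ), g n z * ψ z) atTop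
        (𝓝 (∫ z in Ioi (0:ℝ), glim z * ψ z)))
    (hα₀ : 0 ≤ α) (hα₁ : α ≤ 1) (hβ₀ : 0 ≤ β) (hβ₁ : β ≤ 1)
    (hψ : Measurable ψ) (hψC : ∀ z, |ψ z| ≤ C)
    (hcα : ∀ n, Measurable (cα n)) (hcβ : ∀ n, Measurable (cβ n))
    (hδα : Tendsto δα atTop (𝓝 0)) (hδβ : Tendsto δβ atTop (𝓝 0))
    (hcαδ : ∀ᶠ n in atTop, ∀ z ∈ Ioo 0 a, |cα n z - Mα| ≤ δα n)
    (hcβδ : ∀ᶠ n in atTop, ∀ z ∈ Ioo 0 a, |cβ n z - Mβ| ≤ δβ n) :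
    Tendsto (fun n => ∫ z in Ioo 0 a, g n z * (collisionRate k₁ α β (cα n z) (cβ n z) z * ψ z))
      atTop (𝓝 (∫ z in Ioo 0 a, glim z * (collisionRate k₁ α β Mα Mβ z * ψ z))) := by
  have hrate : ∀ z ∈ Ioo 0 a, ∀ Mα' Mβ' Mα'' Mβ'' : ℝ,
      |collisionRate k₁ α β Mα' Mβ' z * ψ z - collisionRate k₁ α β Mα'' Mβ'' z * ψ z|
        ≤ |k₁| * (1 + a) * (|Mα' - Mα''| + |Mβ' - Mβ''|) * C := fun z hz _ _ _ _ => by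
    rw [← sub_mul, abs_mul]
    exact mul_le_mul (abs_collisionRate_sub_le hz.1.le hz.2.le hα₀ hα₁ hβ₀ hβ₁) (hψC z)
      (abs_nonneg _) (by have := hz.1.trans hz.2; positivity)
  have hbound : ∀ z ∈ Ioo 0 a,
      |collisionRate k₁ α β Mα Mβ z * ψ z| ≤ |k₁| * (1 + a) * (|Mα| + |Mβ|) * C :=
    fun z hz => by simpa [collisionRate] using hrate z hz Mα Mβ 0 0
  refine tendsto_integral_mul_of_uniform_approx (K := G)
    (δ := fun n => |k₁| * (1 + a) * (δα n + δβ n) * C)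
    (fun n => (integrableOn_of_one_add_mul (hg n)).mono_set Ioo_subset_Ioi_self) (fun n => ?_)
    (fun n => by unfold collisionRate; fun_prop) (by unfold collisionRate; fun_prop)
    (ae_restrict_of_forall_mem measurableSet_Ioo hbound)
    (tendsto_setIntegral_mul_of_weak hweak measurableSet_Ioo Ioo_subset_Ioi_self
      (by unfold collisionRate; fun_prop) hbound)
    (by simpa using ((hδα.add hδβ).const_mul _).mul_const C) ?_
  · simp_rw [abs_of_nonneg (hg₀ n _)]
    exact (setIntegral_le_integral_one_add_mul (hg₀ n) (hg n) measurableSet_Ioo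
      Ioo_subset_Ioi_self).trans (hgG n)
  · filter_upwards [hcαδ, hcβδ] with n hαn hβn
    refine ae_restrict_of_forall_mem measurableSet_Ioo fun z hz => (hrate z hz _ _ _ _).trans ?_
    have hC : 0 ≤ C := (abs_nonneg _).trans (hψC 0)
    have ha : 0 ≤ 1 + a := by linarith [hz.1.trans hz.2]
    gcongr
    exacts [hαn z hz, hβn z hz]

end WeakLimit

theorem B3n_weak_convergence_general
    (k₁ α β G : ℝ) (g : ℕ → ℝ → ℝ) (glim : ℝ → ℝ)
    (hα : 0 < α) (hαβ : α ≤ β) (hβ : β < 1)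
    (hgnn : ∀ n z, 0 ≤ g n z)
    (hgint : ∀ n, IntegrableOn (fun z => (1 + z) * g n z) (Ioi 0) volume)
    (hgbd : ∀ n, (∫ z in Ioi (0:ℝ), (1 + z) * g n z) ≤ G)
    (hglim : MemSplus glim)
    (hweak : ∀ ψ : ℝ → ℝ, Measurable ψ → (∃ C, ∀ z, |ψ z| ≤ C) →
      Tendsto (fun n => ∫ z in Ioi (0:ℝ), g n z * ψ z) atTop
        (nhds (∫ z in Ioi (0:ℝ), glim z * ψ z))) :
    ∀ a > (0:ℝ), ∀ ψ : ℝ → ℝ, Measurable ψ → (∃ C, ∀ z, |ψ z| ≤ C) →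
      Tendsto (fun n : ℕ => ∫ z in Ioo (0:ℝ) a, B3n (PhiN k₁ α β (n : ℝ)) (n : ℝ) (g n) z * ψ z)
        atTop (nhds (∫ z in Ioo (0:ℝ) a, B3 (Phi k₁ α β) glim z * ψ z)) := by
  intro a _ ψ hψ ⟨C, hC⟩
  obtain ⟨hglim₀, hglim⟩ := hglim
  have hα₁ : α < 1 := hαβ.trans_lt hβ
  have hβ₀ : 0 ≤ β := hα.le.trans hαβ
  have hmoment : ∀ {f : ℝ → ℝ} {γ : ℝ}, IntegrableOn (fun z => (1 + z) * f z) (Ioi 0) →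
      0 ≤ γ → γ < 1 → IntegrableOn (fun z => f z * z ^ γ) (Ioi 0) :=
    fun hf h₀ h₁ => integrableOn_mul_rpow_of_one_add hf h₀ h₁.le
  have hmeas : ∀ n {γ : ℝ}, 0 ≤ γ → γ < 1 →
      Measurable fun z => truncPowMoment (g n) γ (n - z) := fun n _ h₀ h₁ =>
    (truncPowMoment_mono (hgnn n) (hmoment (hgint n) h₀ h₁)).measurable.comp (by fun_prop)
  obtain ⟨δα, hδα, hcα⟩ :=
    exists_tendsto_zero_abs_truncPowMoment_sub_le hgnn hgint hgbd hglim₀ hglim hweak hα.le hα₁ a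
  obtain ⟨δβ, hδβ, hcβ⟩ :=
    exists_tendsto_zero_abs_truncPowMoment_sub_le hgnn hgint hgbd hglim₀ hglim hweak hβ₀ hβ a
  have hB3n : ∀ n : ℕ, ∫ z in Ioo 0 a, B3n (PhiN k₁ α β n) n (g n) z * ψ z
      = ∫ z in Ioo 0 a, g n z * (collisionRate k₁ α β (truncPowMoment (g n) α (n - z))
          (truncPowMoment (g n) β (n - z)) z * ψ z) := fun n =>
    setIntegral_congr_fun measurableSet_Ioo fun z hz => by
      rw [B3n_PhiN_eq hz.1 (hmoment (hgint n) hα.le hα₁) (hmoment (hgint n) hβ₀ hβ), mul_assoc]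
  simp_rw [hB3n, B3_Phi_eq (hmoment hglim hα.le hα₁) (hmoment hglim hβ₀ hβ), mul_assoc]
  exact tendsto_setIntegral_mul_collisionRate hgnn hgint hgbd hweak hα.le hα₁.le hβ₀ hβ.le hψ hC
    (fun n => hmeas n hα.le hα₁) (fun n => hmeas n hβ₀ hβ) hδα hδβ hcα hcβ

/-- Weak `L¹((0,a))` convergence of the truncated collision loss terms. -/
theorem B3n_weak_convergence
    (k₁ α β G : ℝ) (g : ℕ → ℝ → ℝ) (glim : ℝ → ℝ)
    (hk₁ : 0 ≤ k₁) (hα : 0 < α) (hαβ : α ≤ β) (hβ : β < 1) (hG : 0 < G)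
    (hgnn : ∀ n z, 0 ≤ g n z)
    (hgmeas : ∀ n, Measurable (g n))
    (hgint : ∀ n, IntegrableOn (fun z => (1 + z) * g n z) (Ioi 0) volume)
    (hgbd : ∀ n, (∫ z in Ioi (0:ℝ), (1 + z) * g n z) ≤ G)
    (hglim : MemSplus glim)
    (hweak : ∀ ψ : ℝ → ℝ, Measurable ψ → (∃ C, ∀ z, |ψ z| ≤ C) →
      Tendsto (fun n => ∫ z in Ioi (0:ℝ), g n z * ψ z) atTop
        (nhds (∫ z in Ioi (0:ℝ), glim z * ψ z))) :
    ∀ a > (0:ℝ), ∀ ψ : ℝ → ℝ, Measurable ψ → (∃ C, ∀ z, |ψ z| ≤ C) →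
      Tendsto (fun n : ℕ => ∫ z in Ioo (0:ℝ) a, B3n (PhiN k₁ α β (n : ℝ)) (n : ℝ) (g n) z * ψ z)
        atTop (nhds (∫ z in Ioo (0:ℝ) a, B3 (Phi k₁ α β) glim z * ψ z)) :=
  B3n_weak_convergence_general k₁ α β G g glim hα hαβ hβ hgnn hgint hgbd hglim hweak
end
end

section
/- Let T > 0, g₀ ∈ S⁺, and assume (Γ₁)–(Γ₅). For n ≥ 1 let gⁿ be the nonnegative mass-conserving solution of the truncated coagulation–collisional breakage system on [0,T]. Fix a > 0, t ∈ [0,T], and let g ∈ S⁺ be such that ∫₀^∞ (1+z)gⁿ(z,s) dz ≤ G(T) for all s ∈ [0,t]. Then for every ψ ∈ L^∞(0,a), | ∫₀^a ψ(z) [ (C₁ⁿ − B₃ⁿ + B₁ⁿ)(gⁿ)(z,s) − (C₁ − B₃ + B₁)(g)(z,s) ] dz | ≤ k₁ ‖ψ‖_{L^∞(0,a)} [ G(T)² (3+N) + ‖g(·,s)‖²_{L¹((1+z)dz)} (5+N) ] for every s ∈ [0,t]; in particular this difference of operators is uniformly dominated in L¹((0,a)) independently of n. -/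
/-!
Since `0 ≤ α ≤ β ≤ 1`, the kernel satisfies `|Φ(x,y)| ≤ 2k₁(1+x)(1+y)`, and `Φₙ ≤ Φ`. Hence each
of `C₁`, `B₃`, `B₁` (truncated or not: truncation only shrinks the domains of integration) is
dominated in `L¹(0,∞)` by a multiple of `‖g‖²` with `‖g‖ = ∫ (1+z)|g(z)| dz`. For `C₁` and `B₁`
this follows from Tonelli and the substitution `x = z₁ - z₂`, `y = z₂`, which turns the
integrals into `∫∫ (1+x)g(x)(1+y)g(y)`, with the extra factor `∫₀^{x+y} P(z|x,y) dz = N` for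
`B₁`. This gives the bound `k₁(3+N)‖g‖²` for each of the two combinations of operators.
Because `g` is only integrable, it is first replaced by a measurable representative, which
changes the operators only on a null set of `(0,∞)`.
-/

open MeasureTheory Set Filter

noncomputable section

open scoped ENNReal

theorem rpow_le_one_add_s14 {x γ : ℝ} (hx : 0 ≤ x) (hγ0 : 0 ≤ γ) (hγ1 : γ ≤ 1) :
    x ^ γ ≤ 1 + x := by
  rcases le_or_gt x 1 with h | h
  · linarith [Real.rpow_le_one hx h hγ0]
  · linarith [Real.rpow_le_self_of_one_le h.le hγ1]

theorem abs_Phi_le {k₁ α β x y : ℝ} (hk₁ : 0 ≤ k₁) (hα : 0 ≤ α) (hαβ : α ≤ β) (hβ : β ≤ 1)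
    (hx : 0 < x) (hy : 0 < y) : |Phi k₁ α β x y| ≤ 2 * k₁ * ((1 + x) * (1 + y)) := by
  have hxα := rpow_le_one_add_s14 hx.le hα (hαβ.trans hβ)
  have hyβ := rpow_le_one_add_s14 hy.le (hα.trans hαβ) hβ
  have hyα := rpow_le_one_add_s14 hy.le hα (hαβ.trans hβ)
  have hxβ := rpow_le_one_add_s14 hx.le (hα.trans hαβ) hβ
  have hsum : x ^ α * y ^ β + y ^ α * x ^ β ≤ 2 * ((1 + x) * (1 + y)) := by
    nlinarith [Real.rpow_nonneg hx.le α, Real.rpow_nonneg hy.le β,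
      Real.rpow_nonneg hy.le α, Real.rpow_nonneg hx.le β]
  rw [Phi, abs_of_nonneg (by positivity), mul_assoc, mul_left_comm]
  exact mul_le_mul_of_nonneg_left hsum hk₁

theorem abs_PhiN_le_abs_Phi (k₁ α β n x y : ℝ) : |PhiN k₁ α β n x y| ≤ |Phi k₁ α β x y| := by
  rw [PhiN, abs_mul]
  refine mul_le_of_le_one_left (abs_nonneg _) ?_
  by_cases h : x + y ∈ Ioo 0 n <;> simp [h]

/-- Unlike `∫⁻ z in Ioi 0, ‖F z‖ₑ ≤ c`, this is additive in `F` even when `F` is not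
measurable, as the collision operators are not known to be. -/
def DominatedOnIoi (F : ℝ → ℝ) (c : ℝ≥0∞) : Prop :=
  ∃ H : ℝ → ℝ≥0∞, Measurable H ∧ (∀ᵐ z ∂volume.restrict (Ioi 0), ‖F z‖ₑ ≤ H z) ∧
    ∫⁻ z in Ioi 0, H z ≤ c

namespace DominatedOnIoi

variable {F G : ℝ → ℝ} {c d : ℝ≥0∞}

theorem mono (hF : DominatedOnIoi F c) (hcd : c ≤ d) : DominatedOnIoi F d :=
  let ⟨H, hH, hFH, hHc⟩ := hF
  ⟨H, hH, hFH, hHc.trans hcd⟩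

theorem congr (hG : DominatedOnIoi G c) (hFG : F =ᵐ[volume.restrict (Ioi 0)] G) :
    DominatedOnIoi F c :=
  let ⟨H, hH, hGH, hHc⟩ := hG
  ⟨H, hH, by filter_upwards [hFG, hGH] with z h h' using h ▸ h', hHc⟩

theorem add (hF : DominatedOnIoi F c) (hG : DominatedOnIoi G d) :
    DominatedOnIoi (fun z => F z + G z) (c + d) :=
  let ⟨H, hH, hFH, hHc⟩ := hF
  let ⟨K, _, hGK, hKd⟩ := hG
  ⟨fun z => H z + K z, by fun_prop,
    by filter_upwards [hFH, hGK] with z h h' using enorm_add_le_of_le h h',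
    by rw [lintegral_add_left hH]; exact add_le_add hHc hKd⟩

theorem sub (hF : DominatedOnIoi F c) (hG : DominatedOnIoi G d) :
    DominatedOnIoi (fun z => F z - G z) (c + d) :=
  let ⟨H, hH, hFH, hHc⟩ := hF
  let ⟨K, _, hGK, hKd⟩ := hG
  ⟨fun z => H z + K z, by fun_prop,
    by filter_upwards [hFH, hGK] with z h h' using enorm_sub_le.trans (add_le_add h h'),
    by rw [lintegral_add_left hH]; exact add_le_add hHc hKd⟩

theorem abs_setIntegral_mul_le {r Cψ : ℝ} {s : Set ℝ} {ψ : ℝ → ℝ}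
    (hF : DominatedOnIoi F (ENNReal.ofReal r)) (hr : 0 ≤ r) (hs : s ⊆ Ioi 0)
    (hψ : ∀ z, |ψ z| ≤ Cψ) : |∫ z in s, ψ z * F z| ≤ Cψ * r := by
  obtain ⟨H, _, hFH, hHr⟩ := hF
  have hCψ : 0 ≤ Cψ := (abs_nonneg _).trans (hψ 0)
  have hbound : ∫⁻ z in s, ‖ψ z * F z‖ₑ ≤ ENNReal.ofReal (Cψ * r) :=
    calc ∫⁻ z in s, ‖ψ z * F z‖ₑ
        ≤ ∫⁻ z in Ioi 0, ENNReal.ofReal Cψ * ‖F z‖ₑ := by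
          refine (lintegral_mono_set hs).trans (lintegral_mono fun z => ?_)
          rw [enorm_mul, Real.enorm_eq_ofReal_abs]
          gcongr
          exact hψ z
      _ ≤ ∫⁻ z in Ioi 0, ENNReal.ofReal Cψ * H z := by
          refine lintegral_mono_ae ?_
          filter_upwards [hFH] with z hz using by gcongr
      _ ≤ ENNReal.ofReal Cψ * ENNReal.ofReal r := by
          rw [lintegral_const_mul' _ _ ENNReal.ofReal_ne_top]
          gcongr
      _ = ENNReal.ofReal (Cψ * r) := (ENNReal.ofReal_mul hCψ).symm
  rw [← Real.norm_eq_abs, ← toReal_enorm]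
  exact ENNReal.toReal_le_of_le_ofReal (mul_nonneg hCψ hr)
    ((enorm_integral_le_lintegral_enorm _).trans hbound)

end DominatedOnIoi

/-- `∫⁻ y, weightedDensity w y` is the norm `‖w‖_{L¹((1+z)dz)}` of the paper. -/
def weightedDensity (w : ℝ → ℝ) : ℝ → ℝ≥0∞ :=
  (Ioi 0).indicator fun y => ‖(1 + y) * w y‖ₑ

theorem measurable_weightedDensity {w : ℝ → ℝ} (hw : Measurable w) :
    Measurable (weightedDensity w) :=
  (by fun_prop : Measurable fun y => ‖(1 + y) * w y‖ₑ).indicator measurableSet_Ioi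

theorem enorm_mul_mul_le_weightedDensity {c x y : ℝ} {Φ : ℝ → ℝ → ℝ} (w : ℝ → ℝ)
    (hΦ : |Φ x y| ≤ c * ((1 + x) * (1 + y))) (hx : 0 < x) (hy : 0 < y) :
    ‖Φ x y * w x * w y‖ₑ
      ≤ ENNReal.ofReal c * (weightedDensity w x * weightedDensity w y) := by
  have hc : 0 ≤ c := nonneg_of_mul_nonneg_left ((abs_nonneg _).trans hΦ) (by positivity)
  simp only [weightedDensity, indicator_of_mem (mem_Ioi.2 hx), indicator_of_mem (mem_Ioi.2 hy),
    Real.enorm_eq_ofReal_abs]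
  rw [← ENNReal.ofReal_mul (abs_nonneg _), ← ENNReal.ofReal_mul hc]
  refine ENNReal.ofReal_le_ofReal ?_
  simp only [abs_mul, abs_of_pos (by linarith : (0:ℝ) < 1 + x),
    abs_of_pos (by linarith : (0:ℝ) < 1 + y)]
  calc |Φ x y| * |w x| * |w y| ≤ c * ((1 + x) * (1 + y)) * |w x| * |w y| := by gcongr
    _ = c * ((1 + x) * |w x| * ((1 + y) * |w y|)) := by ring

theorem lintegral_lintegral_comp_sub {h : ℝ → ℝ → ℝ≥0∞} (hh : Measurable (Function.uncurry h)) :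
    ∫⁻ z, ∫⁻ z₁, h (z - z₁) z₁ = ∫⁻ z₁, ∫⁻ x, h x z₁ := by
  rw [lintegral_lintegral_swap (f := fun z z₁ => h (z - z₁) z₁)
    (hh.comp (f := fun p : ℝ × ℝ => (p.1 - p.2, p.2)) (by fun_prop)).aemeasurable]
  exact lintegral_congr fun z₁ => lintegral_sub_right_eq_self (h · z₁) z₁

theorem lintegral_lintegral_mul_self {f : ℝ → ℝ≥0∞} (hf : Measurable f) :
    ∫⁻ y, ∫⁻ x, f x * f y = (∫⁻ x, f x) ^ 2 := by
  simp_rw [lintegral_mul_const _ hf]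
  rw [lintegral_const_mul _ hf, sq]

theorem enorm_mul_le_of_abs_le_one {e r : ℝ} (he : |e| ≤ 1) : ‖e * r‖ₑ ≤ ‖r‖ₑ := by
  rw [enorm_mul, Real.enorm_eq_ofReal_abs]
  exact mul_le_of_le_one_left' (ENNReal.ofReal_le_one.2 he)

theorem enorm_one_half : ‖(1 / 2 : ℝ)‖ₑ = 2⁻¹ := by
  rw [Real.enorm_of_nonneg (by norm_num), one_div, ENNReal.ofReal_inv_of_pos two_pos,
    ENNReal.ofReal_ofNat]

theorem dominatedOnIoi_C1 {c : ℝ} {E Φ : ℝ → ℝ → ℝ} {w : ℝ → ℝ}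
    (hΦ : ∀ x y, 0 < x → 0 < y → |Φ x y| ≤ c * ((1 + x) * (1 + y)))
    (hE : ∀ x y, |E x y| ≤ 1) (hw : Measurable w) :
    DominatedOnIoi (C1 E Φ w) (2⁻¹ * ENNReal.ofReal c * (∫⁻ y, weightedDensity w y) ^ 2) := by
  set ρ := weightedDensity w
  have hρ : Measurable ρ := measurable_weightedDensity hw
  refine ⟨fun z => 2⁻¹ * ENNReal.ofReal c * ∫⁻ z₁, ρ (z - z₁) * ρ z₁,
    ((Measurable.lintegral_prod_right' (f := fun p : ℝ × ℝ => ρ (p.1 - p.2) * ρ p.2)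
      (by fun_prop)).const_mul _), ae_of_all _ fun z => ?_, ?_⟩
  · calc ‖C1 E Φ w z‖ₑ
        ≤ 2⁻¹ * ∫⁻ z₁ in Ioo 0 z, ‖E (z - z₁) z₁ * Φ (z - z₁) z₁ * w (z - z₁) * w z₁‖ₑ := by
          rw [C1, enorm_mul, enorm_one_half]
          gcongr
          exact enorm_integral_le_lintegral_enorm _
      _ ≤ 2⁻¹ * ∫⁻ z₁ in Ioo 0 z, ENNReal.ofReal c * (ρ (z - z₁) * ρ z₁) := by
          gcongr 2⁻¹ * ?_
          refine setLIntegral_mono' measurableSet_Ioo fun z₁ hz₁ => ?_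
          have hx : 0 < z - z₁ := sub_pos.2 hz₁.2
          rw [show ∀ e a b d : ℝ, e * a * b * d = e * (a * b * d) by intros; ring]
          exact (enorm_mul_le_of_abs_le_one (hE _ _)).trans
            (enorm_mul_mul_le_weightedDensity w (hΦ _ _ hx hz₁.1) hx hz₁.1)
      _ ≤ 2⁻¹ * ∫⁻ z₁, ENNReal.ofReal c * (ρ (z - z₁) * ρ z₁) := by
          gcongr
          exact Measure.restrict_le_self
      _ = 2⁻¹ * ENNReal.ofReal c * ∫⁻ z₁, ρ (z - z₁) * ρ z₁ := by
          rw [lintegral_const_mul' _ _ ENNReal.ofReal_ne_top, mul_assoc]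
  · calc ∫⁻ z in Ioi 0, 2⁻¹ * ENNReal.ofReal c * ∫⁻ z₁, ρ (z - z₁) * ρ z₁
        ≤ ∫⁻ z, 2⁻¹ * ENNReal.ofReal c * ∫⁻ z₁, ρ (z - z₁) * ρ z₁ :=
          setLIntegral_le_lintegral _ _
      _ = 2⁻¹ * ENNReal.ofReal c * (∫⁻ y, ρ y) ^ 2 := by
          rw [lintegral_const_mul' _ _ (by finiteness),
            lintegral_lintegral_comp_sub (h := fun x y => ρ x * ρ y) (by fun_prop),
            lintegral_lintegral_mul_self hρ]

/-- Collision loss term with the `z₁`-integral over `S`: `B3 Φ g z = B3On Φ g (Ioi 0) z` and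
`B3n Φ n g z = B3On Φ g (Ioo 0 (n - z)) z`. -/
def B3On (Φ : ℝ → ℝ → ℝ) (g : ℝ → ℝ) (S : Set ℝ) (z : ℝ) : ℝ :=
  ∫ z₁ in S, Φ z z₁ * g z * g z₁

theorem dominatedOnIoi_B3On {c : ℝ} {Φ : ℝ → ℝ → ℝ} {w : ℝ → ℝ} {S : ℝ → Set ℝ}
    (hΦ : ∀ x y, 0 < x → 0 < y → |Φ x y| ≤ c * ((1 + x) * (1 + y)))
    (hS : ∀ z, S z ⊆ Ioi 0) (hw : Measurable w) :
    DominatedOnIoi (fun z => B3On Φ w (S z) z)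
      (ENNReal.ofReal c * (∫⁻ y, weightedDensity w y) ^ 2) := by
  set ρ := weightedDensity w
  have hρ : Measurable ρ := measurable_weightedDensity hw
  refine ⟨fun z => ENNReal.ofReal c * (ρ z * ∫⁻ y, ρ y), by fun_prop, ?_, ?_⟩
  · filter_upwards [ae_restrict_mem measurableSet_Ioi] with z hz
    calc ‖B3On Φ w (S z) z‖ₑ ≤ ∫⁻ z₁ in S z, ‖Φ z z₁ * w z * w z₁‖ₑ :=
          enorm_integral_le_lintegral_enorm _
      _ ≤ ∫⁻ z₁ in Ioi 0, ‖Φ z z₁ * w z * w z₁‖ₑ := lintegral_mono_set (hS z)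
      _ ≤ ∫⁻ z₁ in Ioi 0, ENNReal.ofReal c * (ρ z * ρ z₁) :=
          setLIntegral_mono' measurableSet_Ioi fun z₁ hz₁ =>
            enorm_mul_mul_le_weightedDensity w (hΦ _ _ hz hz₁) hz hz₁
      _ ≤ ∫⁻ z₁, ENNReal.ofReal c * (ρ z * ρ z₁) := setLIntegral_le_lintegral _ _
      _ = ENNReal.ofReal c * (ρ z * ∫⁻ y, ρ y) := by
          rw [lintegral_const_mul' _ _ ENNReal.ofReal_ne_top, lintegral_const_mul _ hρ]
  · calc ∫⁻ z in Ioi 0, ENNReal.ofReal c * (ρ z * ∫⁻ y, ρ y)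
        ≤ ∫⁻ z, ENNReal.ofReal c * (ρ z * ∫⁻ y, ρ y) := setLIntegral_le_lintegral _ _
      _ = ENNReal.ofReal c * (∫⁻ y, ρ y) ^ 2 := by
          rw [lintegral_const_mul' _ _ ENNReal.ofReal_ne_top, lintegral_mul_const _ hρ, sq]

/-- Collisional breakage gain term with the `z₁`-integral over `S`: `B1 P E Φ g z` and
`B1n P E Φ n g z` are `B1On P E Φ g S z` with `S = Ioi z` and `S = Ioo z n`. -/
def B1On (P : ℝ → ℝ → ℝ → ℝ) (E Φ : ℝ → ℝ → ℝ) (g : ℝ → ℝ) (S : Set ℝ) (z : ℝ) : ℝ :=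
  (1 / 2) * ∫ z₁ in S, ∫ z₂ in Ioo (0:ℝ) z₁,
    P z (z₁ - z₂) z₂ * (1 - E (z₁ - z₂) z₂) * Φ (z₁ - z₂) z₂ * g (z₁ - z₂) * g z₂

/-- Bound for the integrand of `B1On` after the substitution `x = z₁ - z₂`, `y = z₂`; the
condition `z < x + y` remembers the constraint `z < z₁`. -/
def breakageDensity (P : ℝ → ℝ → ℝ → ℝ) (w : ℝ → ℝ) (z x y : ℝ) : ℝ≥0∞ :=
  if z < x + y then ‖P z x y‖ₑ * (weightedDensity w x * weightedDensity w y) else 0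

section breakage

variable {P : ℝ → ℝ → ℝ → ℝ} {w : ℝ → ℝ}

theorem measurable_breakageDensity (hP : Measurable fun p : ℝ × ℝ × ℝ => P p.1 p.2.1 p.2.2)
    (hw : Measurable w) :
    Measurable fun p : ℝ × ℝ × ℝ => breakageDensity P w p.1 p.2.1 p.2.2 := by
  have hρ := measurable_weightedDensity hw
  exact Measurable.ite (measurableSet_lt measurable_fst (by fun_prop))
    (hP.enorm.mul ((hρ.comp (by fun_prop)).mul (hρ.comp (by fun_prop)))) measurable_const

theorem enorm_B1On_le {c z : ℝ} {E Φ : ℝ → ℝ → ℝ} {S : Set ℝ}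
    (hΦ : ∀ x y, 0 < x → 0 < y → |Φ x y| ≤ c * ((1 + x) * (1 + y)))
    (hE : ∀ x y, |1 - E x y| ≤ 1) (hS : S ⊆ Ioi z) :
    ‖B1On P E Φ w S z‖ₑ
      ≤ 2⁻¹ * ENNReal.ofReal c * ∫⁻ z₁, ∫⁻ z₂, breakageDensity P w z (z₁ - z₂) z₂ := by
  calc ‖B1On P E Φ w S z‖ₑ
      ≤ 2⁻¹ * ∫⁻ z₁ in S, ∫⁻ z₂ in Ioo 0 z₁, ‖P z (z₁ - z₂) z₂ * (1 - E (z₁ - z₂) z₂) *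
          Φ (z₁ - z₂) z₂ * w (z₁ - z₂) * w z₂‖ₑ := by
        rw [B1On, enorm_mul, enorm_one_half]
        gcongr
        exact (enorm_integral_le_lintegral_enorm _).trans
          (lintegral_mono fun z₁ => enorm_integral_le_lintegral_enorm _)
    _ ≤ 2⁻¹ * ∫⁻ z₁ in Ioi z, ∫⁻ z₂ in Ioo 0 z₁, ‖P z (z₁ - z₂) z₂ * (1 - E (z₁ - z₂) z₂) *
          Φ (z₁ - z₂) z₂ * w (z₁ - z₂) * w z₂‖ₑ := by
        gcongr 2⁻¹ * ?_
        exact lintegral_mono_set hS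
    _ ≤ 2⁻¹ * ∫⁻ z₁ in Ioi z, ∫⁻ z₂ in Ioo 0 z₁,
          ENNReal.ofReal c * breakageDensity P w z (z₁ - z₂) z₂ := by
        gcongr 2⁻¹ * ?_
        refine setLIntegral_mono' measurableSet_Ioi fun z₁ hz₁ =>
          setLIntegral_mono' measurableSet_Ioo fun z₂ hz₂ => ?_
        have hx : 0 < z₁ - z₂ := sub_pos.2 hz₂.2
        rw [show ∀ p e a b d : ℝ, p * e * a * b * d = p * (e * (a * b * d)) by intros; ring,
          enorm_mul, breakageDensity, if_pos (by simpa using mem_Ioi.1 hz₁),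
          mul_left_comm (ENNReal.ofReal c)]
        gcongr
        exact (enorm_mul_le_of_abs_le_one (hE _ _)).trans
          (enorm_mul_mul_le_weightedDensity w (hΦ _ _ hx hz₂.1) hx hz₂.1)
    _ ≤ 2⁻¹ * ∫⁻ z₁, ∫⁻ z₂, ENNReal.ofReal c * breakageDensity P w z (z₁ - z₂) z₂ := by
        gcongr 2⁻¹ * ?_
        exact (setLIntegral_le_lintegral _ _).trans
          (lintegral_mono fun z₁ => setLIntegral_le_lintegral _ _)
    _ = 2⁻¹ * ENNReal.ofReal c * ∫⁻ z₁, ∫⁻ z₂, breakageDensity P w z (z₁ - z₂) z₂ := by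
        simp_rw [lintegral_const_mul' _ _ ENNReal.ofReal_ne_top, mul_assoc]

theorem lintegral_Ioi_breakageDensity_le {ν : ℝ≥0∞} {x y : ℝ}
    (hP : Measurable fun p : ℝ × ℝ × ℝ => P p.1 p.2.1 p.2.2)
    (hPν : ∀ x y, 0 < x → 0 < y → ∫⁻ z in Ioo 0 (x + y), ‖P z x y‖ₑ ≤ ν) :
    ∫⁻ z in Ioi 0, breakageDensity P w z x y
      ≤ ν * (weightedDensity w x * weightedDensity w y) := by
  by_cases hxy : 0 < x ∧ 0 < y
  · calc ∫⁻ z in Ioi 0, breakageDensity P w z x y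
        = ∫⁻ z in Ioo 0 (x + y), ‖P z x y‖ₑ * (weightedDensity w x * weightedDensity w y) := by
          rw [← Iio_inter_Ioi, ← Measure.restrict_restrict measurableSet_Iio,
            ← lintegral_indicator measurableSet_Iio]
          rfl
      _ = (∫⁻ z in Ioo 0 (x + y), ‖P z x y‖ₑ) *
            (weightedDensity w x * weightedDensity w y) :=
          lintegral_mul_const _ (hP.comp (f := fun z => (z, x, y)) (by fun_prop)).enorm
      _ ≤ ν * (weightedDensity w x * weightedDensity w y) := by
          gcongr
          exact hPν x y hxy.1 hxy.2
  · have hρ : weightedDensity w x * weightedDensity w y = 0 := by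
      rcases not_and_or.1 hxy with h | h <;> simp [weightedDensity, h]
    simp [breakageDensity, hρ]

theorem lintegral_breakageDensity_le {ν : ℝ≥0∞}
    (hP : Measurable fun p : ℝ × ℝ × ℝ => P p.1 p.2.1 p.2.2) (hw : Measurable w)
    (hPν : ∀ x y, 0 < x → 0 < y → ∫⁻ z in Ioo 0 (x + y), ‖P z x y‖ₑ ≤ ν) :
    ∫⁻ z in Ioi 0, ∫⁻ z₁, ∫⁻ z₂, breakageDensity P w z (z₁ - z₂) z₂
      ≤ ν * (∫⁻ y, weightedDensity w y) ^ 2 := by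
  have hG := measurable_breakageDensity hP hw
  have hρ := measurable_weightedDensity hw
  calc ∫⁻ z in Ioi 0, ∫⁻ z₁, ∫⁻ z₂, breakageDensity P w z (z₁ - z₂) z₂
      = ∫⁻ z in Ioi 0, ∫⁻ y, ∫⁻ x, breakageDensity P w z x y :=
        lintegral_congr fun z => lintegral_lintegral_comp_sub
          (hG.comp (f := fun q : ℝ × ℝ => (z, q.1, q.2)) (by fun_prop))
    _ = ∫⁻ y, ∫⁻ z in Ioi 0, ∫⁻ x, breakageDensity P w z x y :=
        lintegral_lintegral_swap (Measurable.lintegral_prod_right'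
          (f := fun q : (ℝ × ℝ) × ℝ => breakageDensity P w q.1.1 q.2 q.1.2)
          (hG.comp (f := fun q : (ℝ × ℝ) × ℝ => (q.1.1, q.2, q.1.2)) (by fun_prop))).aemeasurable
    _ = ∫⁻ y, ∫⁻ x, ∫⁻ z in Ioi 0, breakageDensity P w z x y :=
        lintegral_congr fun y => lintegral_lintegral_swap
          (hG.comp (f := fun q : ℝ × ℝ => (q.1, q.2, y)) (by fun_prop)).aemeasurable
    _ ≤ ∫⁻ y, ∫⁻ x, ν * (weightedDensity w x * weightedDensity w y) :=
        lintegral_mono fun y => lintegral_mono fun x => lintegral_Ioi_breakageDensity_le hP hPν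
    _ = ν * (∫⁻ y, weightedDensity w y) ^ 2 := by
        simp_rw [lintegral_const_mul _ (hρ.mul_const _), lintegral_mul_const _ hρ]
        rw [lintegral_const_mul _ (hρ.const_mul _), lintegral_const_mul _ hρ, sq]

theorem dominatedOnIoi_B1On {c : ℝ} {ν : ℝ≥0∞} {E Φ : ℝ → ℝ → ℝ} {S : ℝ → Set ℝ}
    (hΦ : ∀ x y, 0 < x → 0 < y → |Φ x y| ≤ c * ((1 + x) * (1 + y)))
    (hE : ∀ x y, |1 - E x y| ≤ 1)
    (hP : Measurable fun p : ℝ × ℝ × ℝ => P p.1 p.2.1 p.2.2)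
    (hPν : ∀ x y, 0 < x → 0 < y → ∫⁻ z in Ioo 0 (x + y), ‖P z x y‖ₑ ≤ ν)
    (hS : ∀ z, S z ⊆ Ioi z) (hw : Measurable w) :
    DominatedOnIoi (fun z => B1On P E Φ w (S z) z)
      (2⁻¹ * ENNReal.ofReal c * (ν * (∫⁻ y, weightedDensity w y) ^ 2)) := by
  have hG := measurable_breakageDensity hP hw
  refine ⟨fun z => 2⁻¹ * ENNReal.ofReal c * ∫⁻ z₁, ∫⁻ z₂, breakageDensity P w z (z₁ - z₂) z₂,
    ?_, ae_of_all _ fun z => enorm_B1On_le hΦ hE (hS z), ?_⟩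
  · refine Measurable.const_mul (Measurable.lintegral_prod_right'
      (f := fun p : ℝ × ℝ => ∫⁻ z₂, breakageDensity P w p.1 (p.2 - z₂) z₂) ?_) _
    exact Measurable.lintegral_prod_right'
      (f := fun q : (ℝ × ℝ) × ℝ => breakageDensity P w q.1.1 (q.1.2 - q.2) q.2)
      (hG.comp (f := fun q : (ℝ × ℝ) × ℝ => (q.1.1, q.1.2 - q.2, q.2)) (by fun_prop))
  · rw [lintegral_const_mul' _ _ (by finiteness)]
    gcongr
    exact lintegral_breakageDensity_le hP hw hPν

end breakage

section congr

variable {w w' : ℝ → ℝ}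

theorem ae_restrict_Ioo_comp_sub (h : w =ᵐ[volume.restrict (Ioi 0)] w') (c : ℝ) :
    ∀ᵐ x ∂volume.restrict (Ioo 0 c), w (c - x) = w' (c - x) := by
  have h' := (Measure.measurePreserving_sub_left volume c).quasiMeasurePreserving.ae
    ((ae_restrict_iff' measurableSet_Ioi).1 h)
  rw [ae_restrict_iff' measurableSet_Ioo]
  filter_upwards [h'] with x hx hxc using hx (sub_pos.2 hxc.2)

theorem C1_congr_ae (h : w =ᵐ[volume.restrict (Ioi 0)] w') (E Φ : ℝ → ℝ → ℝ) (z : ℝ) :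
    C1 E Φ w z = C1 E Φ w' z := by
  rw [C1, C1, integral_congr_ae]
  filter_upwards [ae_restrict_of_ae_restrict_of_subset Ioo_subset_Ioi_self h,
    ae_restrict_Ioo_comp_sub h z] with z₁ h₁ h₂
  rw [h₁, h₂]

theorem B3On_congr_ae (h : w =ᵐ[volume.restrict (Ioi 0)] w') (Φ : ℝ → ℝ → ℝ) {S : Set ℝ}
    (hS : S ⊆ Ioi 0) {z : ℝ} (hz : w z = w' z) : B3On Φ w S z = B3On Φ w' S z := by
  rw [B3On, B3On, integral_congr_ae]
  filter_upwards [ae_restrict_of_ae_restrict_of_subset hS h] with z₁ h₁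
  rw [h₁, hz]

theorem B1On_congr_ae (h : w =ᵐ[volume.restrict (Ioi 0)] w') (P : ℝ → ℝ → ℝ → ℝ)
    (E Φ : ℝ → ℝ → ℝ) (S : Set ℝ) (z : ℝ) : B1On P E Φ w S z = B1On P E Φ w' S z := by
  rw [B1On, B1On]
  congr 1
  refine integral_congr_ae (ae_of_all _ fun z₁ => integral_congr_ae ?_)
  filter_upwards [ae_restrict_of_ae_restrict_of_subset Ioo_subset_Ioi_self h,
    ae_restrict_Ioo_comp_sub h z₁] with z₂ h₁ h₂
  rw [h₁, h₂]

end congr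

theorem weightedNorm_nonneg {w : ℝ → ℝ} (hw0 : ∀ z, 0 ≤ w z) :
    0 ≤ ∫ z in Ioi 0, (1 + z) * w z :=
  setIntegral_nonneg measurableSet_Ioi fun z hz => mul_nonneg (by linarith [mem_Ioi.1 hz]) (hw0 z)

theorem exists_measurable_ae_eq_lintegral_weightedDensity {w : ℝ → ℝ} (hw0 : ∀ z, 0 ≤ w z)
    (hw : IntegrableOn (fun z => (1 + z) * w z) (Ioi 0)) :
    ∃ w' : ℝ → ℝ, Measurable w' ∧ w =ᵐ[volume.restrict (Ioi 0)] w' ∧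
      ∫⁻ y, weightedDensity w' y = ENNReal.ofReal (∫ z in Ioi 0, (1 + z) * w z) := by
  have hmeas : AEMeasurable w (volume.restrict (Ioi 0)) := by
    have hinv : Measurable fun z : ℝ => (1 + z)⁻¹ := by fun_prop
    refine (hinv.aemeasurable.mul hw.aemeasurable).congr ?_
    filter_upwards [ae_restrict_mem measurableSet_Ioi] with z hz
    have : (1 + z) ≠ 0 := by linarith [mem_Ioi.1 hz]
    simp [this]
  refine ⟨hmeas.mk w, hmeas.measurable_mk, hmeas.ae_eq_mk, ?_⟩
  calc ∫⁻ y, weightedDensity (hmeas.mk w) y = ∫⁻ y in Ioi 0, ‖(1 + y) * hmeas.mk w y‖ₑ :=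
        lintegral_indicator measurableSet_Ioi _
    _ = ∫⁻ y in Ioi 0, ‖(1 + y) * w y‖ₑ := by
        refine lintegral_congr_ae ?_
        filter_upwards [hmeas.ae_eq_mk] with y hy
        rw [hy]
    _ = ENNReal.ofReal (∫ y in Ioi 0, ‖(1 + y) * w y‖) :=
        (ofReal_integral_norm_eq_lintegral_enorm hw).symm
    _ = ENNReal.ofReal (∫ z in Ioi 0, (1 + z) * w z) := by
        congr 1
        refine setIntegral_congr_fun measurableSet_Ioi fun y hy => ?_
        exact Real.norm_of_nonneg (mul_nonneg (by linarith [mem_Ioi.1 hy]) (hw0 y))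

theorem integrableOn_Ioo_of_le_rpow {f : ℝ → ℝ} {S W k τ : ℝ} (hf : Measurable f) (hW : 0 < W)
    (hτ : τ < 1) (hbd : ∀ z ∈ Ioo 0 W, ‖f z‖ ≤ k * z ^ (-τ))
    (hmul : IntegrableOn (fun z => z * f z) (Ioo 0 S)) : IntegrableOn f (Ioo 0 S) := by
  have hnear : IntegrableOn f (Ioo 0 W) := by
    have hrpow := (intervalIntegrable_iff_integrableOn_Ioo_of_le hW.le).1
      (intervalIntegral.intervalIntegrable_rpow' (by linarith : -1 < -τ))
    refine Integrable.mono' (hrpow.const_mul k) hf.aestronglyMeasurable ?_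
    filter_upwards [ae_restrict_mem measurableSet_Ioo] with z hz using hbd z hz
  have hfar : IntegrableOn f (Ico W S) := by
    refine Integrable.mono' ((hmul.mono_set fun z hz => ⟨hW.trans_le hz.1, hz.2⟩).norm.const_mul
      W⁻¹) hf.aestronglyMeasurable ?_
    filter_upwards [ae_restrict_mem measurableSet_Ico] with z hz
    rw [norm_mul, Real.norm_of_nonneg (hW.le.trans hz.1), ← mul_assoc]
    refine le_mul_of_one_le_left (norm_nonneg _) ?_
    rw [inv_mul_eq_div, one_le_div hW]
    exact hz.1
  exact (hnear.union hfar).mono_set fun z hz =>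
    (lt_or_ge z W).imp (fun h => ⟨hz.1, h⟩) (fun h => ⟨h, hz.2⟩)

/-- The Bochner identity `∫ P = N` says nothing unless `P` is integrable: (Γ₅) gives
integrability near `0`, the mass identity away from `0`. -/
theorem lintegral_enorm_fragment_eq {P : ℝ → ℝ → ℝ → ℝ} {N x y : ℝ}
    (hPmeas : Measurable fun p : ℝ × ℝ × ℝ => P p.1 p.2.1 p.2.2)
    (hPnn : ∀ z z₁ z₂, 0 ≤ P z z₁ z₂)
    (hPnum : ∀ z₁ z₂, 0 < z₁ → 0 < z₂ → (∫ z in Ioo (0:ℝ) (z₁ + z₂), P z z₁ z₂) = N)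
    (hPmass : ∀ z₁ z₂, 0 < z₁ → 0 < z₂ →
      (∫ z in Ioo (0:ℝ) (z₁ + z₂), z * P z z₁ z₂) = z₁ + z₂)
    (hΓ₅ : ∀ W > (0:ℝ), ∃ kW > (0:ℝ), ∃ τ₂ : ℝ, 0 ≤ τ₂ ∧ τ₂ < 1 ∧
      ∀ z₁ z₂ : ℝ, 0 < z₁ → 0 < z₂ → W < z₁ + z₂ →
        ∀ z ∈ Ioo (0:ℝ) W, P z z₁ z₂ ≤ kW * z ^ (-τ₂))
    (hx : 0 < x) (hy : 0 < y) :
    ∫⁻ z in Ioo 0 (x + y), ‖P z x y‖ₑ = ENNReal.ofReal N := by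
  obtain ⟨k, -, τ, -, hτ, hbd⟩ := hΓ₅ ((x + y) / 2) (by positivity)
  have hmul : IntegrableOn (fun z => z * P z x y) (Ioo 0 (x + y)) := by
    by_contra h
    linarith [integral_undef h ▸ hPmass x y hx hy]
  have hint : IntegrableOn (fun z => P z x y) (Ioo 0 (x + y)) :=
    integrableOn_Ioo_of_le_rpow (hPmeas.comp (f := fun z => (z, x, y)) (by fun_prop))
      (by positivity) hτ (fun z hz => (Real.norm_of_nonneg (hPnn _ _ _)).trans_le
        (hbd x y hx hy (by linarith) z hz)) hmul
  rw [← ofReal_integral_norm_eq_lintegral_enorm hint, ← hPnum x y hx hy]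
  simp only [Real.norm_of_nonneg (hPnn _ _ _)]

theorem dominatedOnIoi_collision {k₁ N : ℝ} {E Φ : ℝ → ℝ → ℝ} {P : ℝ → ℝ → ℝ → ℝ}
    {w : ℝ → ℝ} {S S' : ℝ → Set ℝ} (hk₁ : 0 ≤ k₁) (hN : 0 ≤ N)
    (hΦ : ∀ x y, 0 < x → 0 < y → |Φ x y| ≤ 2 * k₁ * ((1 + x) * (1 + y)))
    (hE0 : ∀ x y, 0 ≤ E x y) (hE1 : ∀ x y, E x y ≤ 1)
    (hP : Measurable fun p : ℝ × ℝ × ℝ => P p.1 p.2.1 p.2.2)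
    (hPN : ∀ x y, 0 < x → 0 < y → ∫⁻ z in Ioo 0 (x + y), ‖P z x y‖ₑ = ENNReal.ofReal N)
    (hS : ∀ z, S z ⊆ Ioi 0) (hS' : ∀ z, S' z ⊆ Ioi z)
    (hw0 : ∀ z, 0 ≤ w z) (hw : IntegrableOn (fun z => (1 + z) * w z) (Ioi 0)) :
    DominatedOnIoi (fun z => C1 E Φ w z - B3On Φ w (S z) z + B1On P E Φ w (S' z) z)
      (ENNReal.ofReal (k₁ * (3 + N) * (∫ z in Ioi 0, (1 + z) * w z) ^ 2)) := by
  obtain ⟨w', hw', hww', hΛ⟩ := exists_measurable_ae_eq_lintegral_weightedDensity hw0 hw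
  have hE : ∀ x y, |E x y| ≤ 1 := fun x y => abs_le.2 ⟨by linarith [hE0 x y], hE1 x y⟩
  have hE' : ∀ x y, |1 - E x y| ≤ 1 := fun x y =>
    abs_le.2 ⟨by linarith [hE1 x y], by linarith [hE0 x y]⟩
  refine ((((dominatedOnIoi_C1 hΦ hE hw').sub (dominatedOnIoi_B3On hΦ hS hw')).add
    (dominatedOnIoi_B1On hΦ hE' hP (fun x y hx hy => (hPN x y hx hy).le) hS' hw')).mono
    (le_of_eq ?_)).congr ?_
  · have htwo : ENNReal.ofReal (2 * k₁) = 2 * ENNReal.ofReal k₁ := by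
      rw [ENNReal.ofReal_mul zero_le_two, ENNReal.ofReal_ofNat]
    have hhalf : (2 : ℝ≥0∞)⁻¹ * (2 * ENNReal.ofReal k₁) = ENNReal.ofReal k₁ := by
      rw [← mul_assoc, ENNReal.inv_mul_cancel two_ne_zero ENNReal.ofNat_ne_top, one_mul]
    rw [hΛ, htwo, hhalf, ENNReal.ofReal_mul (by positivity), ENNReal.ofReal_mul hk₁,
      ENNReal.ofReal_add zero_le_three hN, ENNReal.ofReal_ofNat,
      ENNReal.ofReal_pow (weightedNorm_nonneg hw0)]
    ring
  · filter_upwards [hww'] with z hz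
    rw [C1_congr_ae hww', B3On_congr_ae hww' Φ (hS z) hz, B1On_congr_ae hww']

theorem trunc_operators_uniformly_dominated_general
    (k₁ α β N T : ℝ) (E : ℝ → ℝ → ℝ) (P : ℝ → ℝ → ℝ → ℝ)
    (g₀ : ℝ → ℝ) (gn : ℕ → ℝ → ℝ → ℝ) (g : ℝ → ℝ → ℝ)
    (hk₁ : 0 ≤ k₁) (hα : 0 < α) (hαβ : α ≤ β) (hβ : β < 1)
    (hEnn : ∀ z z₁, 0 ≤ E z z₁) (hEle : ∀ z z₁, E z z₁ ≤ 1)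
    (hPmeas : Measurable fun p : ℝ × ℝ × ℝ => P p.1 p.2.1 p.2.2)
    (hPnn : ∀ z z₁ z₂, 0 ≤ P z z₁ z₂)
    (hPnum : ∀ z₁ z₂, 0 < z₁ → 0 < z₂ → (∫ z in Ioo (0:ℝ) (z₁ + z₂), P z z₁ z₂) = N)
    (hPmass : ∀ z₁ z₂, 0 < z₁ → 0 < z₂ → (∫ z in Ioo (0:ℝ) (z₁ + z₂), z * P z z₁ z₂) = z₁ + z₂)
    (hΓ₅ : ∀ W > (0:ℝ), ∃ kW > (0:ℝ), ∃ τ₂ : ℝ, 0 ≤ τ₂ ∧ τ₂ < 1 ∧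
      ∀ z₁ z₂ : ℝ, 0 < z₁ → 0 < z₂ → W < z₁ + z₂ →
        ∀ z ∈ Ioo (0:ℝ) W, P z z₁ z₂ ≤ kW * z ^ (-τ₂))
    (n : ℕ)
    (hsol : IsTruncSol k₁ α β E P T g₀ n (gn n))
    (a : ℝ) (t : ℝ) (htT : t ∈ Icc (0:ℝ) T)
    (hg : ∀ s ∈ Icc (0:ℝ) t, MemSplus (fun z => g z s))
    (GT : ℝ)
    (hGT : ∀ s ∈ Icc (0:ℝ) t, (∫ z in Ioi (0:ℝ), (1 + z) * gn n z s) ≤ GT)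
    (ψ : ℝ → ℝ) (Cψ : ℝ) (hψb : ∀ z, |ψ z| ≤ Cψ) :
    ∀ s ∈ Icc (0:ℝ) t,
      |∫ z in Ioo (0:ℝ) a, ψ z *
        ((C1 E (PhiN k₁ α β (n : ℝ)) (fun y => gn n y s) z
            - B3n (PhiN k₁ α β (n : ℝ)) (n : ℝ) (fun y => gn n y s) z
            + B1n P E (PhiN k₁ α β (n : ℝ)) (n : ℝ) (fun y => gn n y s) z)
          - (C1 E (Phi k₁ α β) (fun y => g y s) z
              - B3 (Phi k₁ α β) (fun y => g y s) z
              + B1 P E (Phi k₁ α β) (fun y => g y s) z))|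
      ≤ k₁ * Cψ * (GT ^ 2 * (3 + N)
          + (∫ z in Ioi (0:ℝ), (1 + z) * g z s) ^ 2 * (5 + N)) := by
  intro s hs
  have hN : 0 ≤ N :=
    hPnum 1 1 one_pos one_pos ▸ setIntegral_nonneg measurableSet_Ioo fun z _ => hPnn z 1 1
  have hPN : ∀ x y, 0 < x → 0 < y → ∫⁻ z in Ioo 0 (x + y), ‖P z x y‖ₑ = ENNReal.ofReal N :=
    fun x y => lintegral_enorm_fragment_eq hPmeas hPnn hPnum hPmass hΓ₅
  have hΦ : ∀ x y, 0 < x → 0 < y → |Phi k₁ α β x y| ≤ 2 * k₁ * ((1 + x) * (1 + y)) :=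
    fun x y => abs_Phi_le hk₁ hα.le hαβ hβ.le
  have hgn0 : ∀ z, 0 ≤ gn n z s := (hsol.1 · s)
  have hDn := dominatedOnIoi_collision (S := fun z => Ioo 0 (n - z)) (S' := (Ioo · n)) hk₁ hN
    (fun x y hx hy => (abs_PhiN_le_abs_Phi k₁ α β n x y).trans (hΦ x y hx hy)) hEnn hEle
    hPmeas hPN (fun _ => Ioo_subset_Ioi_self) (fun _ => Ioo_subset_Ioi_self) hgn0
    (hsol.2.2.1 s ⟨hs.1, hs.2.trans htT.2⟩)
  have hD := dominatedOnIoi_collision (S := fun _ => Ioi 0) (S' := Ioi) hk₁ hN hΦ hEnn hEle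
    hPmeas hPN (fun _ => subset_rfl) (fun _ => subset_rfl) (hg s hs).1 (hg s hs).2
  have hMn := weightedNorm_nonneg hgn0
  have hM := weightedNorm_nonneg (hg s hs).1
  have hCψ : 0 ≤ Cψ := (abs_nonneg _).trans (hψb 0)
  calc _ ≤ Cψ * (k₁ * (3 + N) * (∫ z in Ioi 0, (1 + z) * gn n z s) ^ 2
          + k₁ * (3 + N) * (∫ z in Ioi 0, (1 + z) * g z s) ^ 2) :=
        ((hDn.sub hD).mono (ENNReal.ofReal_add (by positivity) (by positivity)).ge
          ).abs_setIntegral_mul_le (by positivity) Ioo_subset_Ioi_self hψb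
    _ ≤ _ := by
        have hMnGT := hGT s hs
        rw [show ∀ A B : ℝ, Cψ * (k₁ * (3 + N) * A + k₁ * (3 + N) * B)
          = k₁ * Cψ * (A * (3 + N) + B * (3 + N)) by intros; ring]
        gcongr
        linarith

/-- Uniform domination in `L¹((0,a))` of the difference between the
truncated and untruncated coagulation–collisional breakage operators. -/
theorem trunc_operators_uniformly_dominated
    (k₁ α β N T : ℝ) (E : ℝ → ℝ → ℝ) (P : ℝ → ℝ → ℝ → ℝ)
    (g₀ : ℝ → ℝ) (gn : ℕ → ℝ → ℝ → ℝ) (g : ℝ → ℝ → ℝ)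
    (hT : 0 < T)
    (hk₁ : 0 ≤ k₁) (hα : 0 < α) (hαβ : α ≤ β) (hβ : β < 1)
    (hEmeas : Measurable (Function.uncurry E))
    (hEsymm : ∀ z z₁, E z z₁ = E z₁ z)
    (hEnn : ∀ z z₁, 0 ≤ E z z₁) (hEle : ∀ z z₁, E z z₁ ≤ 1)
    (hΓ₃ : ∀ z ∈ Ioo (0:ℝ) 1, ∀ z₁ ∈ Ioo (0:ℝ) 1, (N - 2) / (N - 1) ≤ E z z₁)
    (hPmeas : Measurable fun p : ℝ × ℝ × ℝ => P p.1 p.2.1 p.2.2)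
    (hPnn : ∀ z z₁ z₂, 0 ≤ P z z₁ z₂)
    (hPsymm : ∀ z z₁ z₂, P z z₁ z₂ = P z z₂ z₁)
    (hPsupp : ∀ z z₁ z₂, z₁ + z₂ < z → P z z₁ z₂ = 0)
    (hPnum : ∀ z₁ z₂, 0 < z₁ → 0 < z₂ → (∫ z in Ioo (0:ℝ) (z₁ + z₂), P z z₁ z₂) = N)
    (hPmass : ∀ z₁ z₂, 0 < z₁ → 0 < z₂ → (∫ z in Ioo (0:ℝ) (z₁ + z₂), z * P z z₁ z₂) = z₁ + z₂)
    (hΓ₄ : ∀ W > (0:ℝ), ∃ Ω₁ : ℝ → ℝ, Tendsto Ω₁ (nhdsWithin 0 (Ioi 0)) (nhds 0) ∧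
      ∀ z₁ ∈ Ioo (0:ℝ) W, ∀ z₂ ∈ Ioo (0:ℝ) z₁, ∀ U : Set ℝ, MeasurableSet U → U ⊆ Ioo 0 1 →
        (∫ z in Ioo (0:ℝ) z₁, U.indicator (fun _ => (1:ℝ)) z * P z (z₁ - z₂) z₂)
          ≤ Ω₁ ((volume U).toReal) * z₁ ^ (-α))
    (hΓ₅ : ∀ W > (0:ℝ), ∃ kW > (0:ℝ), ∃ τ₂ : ℝ, 0 ≤ τ₂ ∧ τ₂ < 1 ∧
      ∀ z₁ z₂ : ℝ, 0 < z₁ → 0 < z₂ → W < z₁ + z₂ →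
        ∀ z ∈ Ioo (0:ℝ) W, P z z₁ z₂ ≤ kW * z ^ (-τ₂))
    (hg₀ : MemSplus g₀)
    (n : ℕ) (hn : 1 ≤ n)
    (hsol : IsTruncSol k₁ α β E P T g₀ n (gn n))
    (a : ℝ) (ha : 0 < a) (t : ℝ) (htT : t ∈ Icc (0:ℝ) T)
    (hg : ∀ s ∈ Icc (0:ℝ) t, MemSplus (fun z => g z s))
    (GT : ℝ)
    (hGT : ∀ s ∈ Icc (0:ℝ) t, (∫ z in Ioi (0:ℝ), (1 + z) * gn n z s) ≤ GT)
    (ψ : ℝ → ℝ) (Cψ : ℝ) (hψm : Measurable ψ) (hψb : ∀ z, |ψ z| ≤ Cψ) :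
    ∀ s ∈ Icc (0:ℝ) t,
      |∫ z in Ioo (0:ℝ) a, ψ z *
        ((C1 E (PhiN k₁ α β (n : ℝ)) (fun y => gn n y s) z
            - B3n (PhiN k₁ α β (n : ℝ)) (n : ℝ) (fun y => gn n y s) z
            + B1n P E (PhiN k₁ α β (n : ℝ)) (n : ℝ) (fun y => gn n y s) z)
          - (C1 E (Phi k₁ α β) (fun y => g y s) z
              - B3 (Phi k₁ α β) (fun y => g y s) z
              + B1 P E (Phi k₁ α β) (fun y => g y s) z))|
      ≤ k₁ * Cψ * (GT ^ 2 * (3 + N)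
          + (∫ z in Ioi (0:ℝ), (1 + z) * g z s) ^ 2 * (5 + N)) :=
  trunc_operators_uniformly_dominated_general k₁ α β N T E P g₀ gn g hk₁ hα hαβ hβ hEnn hEle hPmeas
    hPnn hPnum hPmass hΓ₅ n hsol a t htT hg GT hGT ψ Cψ hψb
end
end
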